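/- Let m ≥ 2, l ≥ 0 and 0 ≤ j, k ≤ m. The U(2)-orbits through the monomials z^{m−j}w^j and z^{m−k}w^k in S^m_l(ℂ²) coincide if and only if k = j or k = m − j. -/
import Mathlib

/-- The action of `U(2)` on homogeneous polynomials in two variables, twisted by the `l`-th
power of the determinant: `(A · P)(v) = det(A)^l • P (A⁻¹ v)`. -/
noncomputable def act (l : ℕ) (A : Matrix.unitaryGroup (Fin 2) ℂ)
    (P : MvPolynomial (Fin 2) ℂ) : MvPolynomial (Fin 2) ℂ :=
  ((A : Matrix (Fin 2) (Fin 2) ℂ).det ^ l) •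
    MvPolynomial.aeval
      (fun i => ∑ j : Fin 2,
        ((A⁻¹ : Matrix.unitaryGroup (Fin 2) ℂ) : Matrix (Fin 2) (Fin 2) ℂ) i j •
          MvPolynomial.X j) P

/-- The monomial `z^{m-j} w^j` in `S^m_l(ℂ²)`. -/
noncomputable def monom (m j : ℕ) : MvPolynomial (Fin 2) ℂ :=
  MvPolynomial.X 0 ^ (m - j) * MvPolynomial.X 1 ^ j

open Polynomial in
lemma key_aux (a b c d u : ℂ) (p q n : ℕ) (hu : u ≠ 0) (hdet : a*d - b*c ≠ 0) (hpq : 0 < p + q)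
    (h : C u * (C a * X + C b)^p * (C c * X + C d)^q = (X : ℂ[X]) ^ n) : n = p ∨ n = q := by
  have hab : p = 0 ∨ a = 0 ∨ b = 0 := by
    by_contra hc
    push_neg at hc
    obtain ⟨hp, ha, hb⟩ := hc
    have h1 : ((-b/a : ℂ))^n = 0 := by
      have h2 := congrArg (Polynomial.eval (-b/a)) h
      simp only [eval_mul, eval_pow, eval_add, eval_C, eval_X] at h2
      rw [← h2]
      have h3 : a * (-b/a) + b = 0 := by field_simp; ring
      rw [h3, zero_pow hp, mul_zero, zero_mul]
    rw [pow_eq_zero_iff'] at h1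
    exact hb (by field_simp at h1; simpa using h1.1)
  have hcd : q = 0 ∨ c = 0 ∨ d = 0 := by
    by_contra hc
    push_neg at hc
    obtain ⟨hq, hcc, hd⟩ := hc
    have h1 : ((-d/c : ℂ))^n = 0 := by
      have h2 := congrArg (Polynomial.eval (-d/c)) h
      simp only [eval_mul, eval_pow, eval_add, eval_C, eval_X] at h2
      rw [← h2]
      have h3 : c * (-d/c) + d = 0 := by field_simp; ring
      rw [h3, zero_pow hq, mul_zero]
    rw [pow_eq_zero_iff'] at h1
    exact hd (by field_simp at h1; simpa using h1.1)
  have hXn : natDegree ((X:ℂ[X])^n) = n := natDegree_X_pow n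
  rcases hab with hp | ha | hb
  · subst hp
    rcases hcd with hq | hcc | hd
    · omega
    · subst hcc
      left
      rw [pow_zero, mul_one, map_zero, zero_mul, zero_add, ← map_pow, ← map_mul] at h
      rw [← h, natDegree_C] at hXn
      omega
    · subst hd
      right
      have hc0 : c ≠ 0 := by intro h0; apply hdet; rw [h0]; ring
      rw [pow_zero, mul_one, map_zero, add_zero, mul_pow, ← map_pow, ← mul_assoc, ← map_mul] at h
      rw [← h, natDegree_C_mul_X_pow q _ (by simp [hu, hc0])] at hXn
      omega
  · subst ha
    rcases hcd with hq | hcc | hd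
    · subst hq
      right
      rw [pow_zero, mul_one, map_zero, zero_mul, zero_add, ← map_pow, ← map_mul] at h
      rw [← h, natDegree_C] at hXn
      omega
    · exfalso; apply hdet; rw [hcc]; ring
    · subst hd
      right
      have hb0 : b ≠ 0 := by intro h0; apply hdet; rw [h0]; ring
      have hc0 : c ≠ 0 := by intro h0; apply hdet; rw [h0]; ring
      rw [map_zero, zero_mul, zero_add, add_zero, mul_pow, ← map_pow, ← map_pow] at h
      have h' : C (u * b^p * c^q) * X^q = (X:ℂ[X])^n := by rw [← h]; push_cast [map_mul]; ring
      rw [← h', natDegree_C_mul_X_pow q _ (by simp [hu, hb0, hc0])] at hXn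
      omega
  · subst hb
    rcases hcd with hq | hcc | hd
    · subst hq
      left
      have ha0 : a ≠ 0 := by intro h0; apply hdet; rw [h0]; ring
      rw [pow_zero, mul_one, map_zero, add_zero, mul_pow, ← map_pow, ← mul_assoc, ← map_mul] at h
      rw [← h, natDegree_C_mul_X_pow p _ (by simp [hu, ha0])] at hXn
      omega
    · subst hcc
      left
      have ha0 : a ≠ 0 := by intro h0; apply hdet; rw [h0]; ring
      have hd0 : d ≠ 0 := by intro h0; apply hdet; rw [h0]; ring
      rw [map_zero, zero_mul, zero_add, add_zero, mul_pow, ← map_pow, ← map_pow] at h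
      have h' : C (u * a^p * d^q) * X^p = (X:ℂ[X])^n := by rw [← h]; push_cast [map_mul]; ring
      rw [← h', natDegree_C_mul_X_pow p _ (by simp [hu, ha0, hd0])] at hXn
      omega
    · exfalso; apply hdet; rw [hd]; ring

lemma act_one (l : ℕ) (P : MvPolynomial (Fin 2) ℂ) : act l 1 P = P := by
  have h : (fun i => ∑ j : Fin 2,
      (((1 : Matrix.unitaryGroup (Fin 2) ℂ)⁻¹ : Matrix.unitaryGroup (Fin 2) ℂ) :
        Matrix (Fin 2) (Fin 2) ℂ) i j • MvPolynomial.X j) =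
      (MvPolynomial.X : Fin 2 → MvPolynomial (Fin 2) ℂ) := by
    funext i
    fin_cases i <;> simp [Fin.sum_univ_two, Matrix.one_apply]
  rw [act, h]
  simp [MvPolynomial.aeval_X_left_apply]

lemma act_mul (l : ℕ) (A B : Matrix.unitaryGroup (Fin 2) ℂ) (P : MvPolynomial (Fin 2) ℂ) :
    act l A (act l B P) = act l (A * B) P := by
  simp only [act, map_smul, smul_smul]
  congr 1
  · rw [Matrix.UnitaryGroup.mul_val, Matrix.det_mul, mul_pow]
  · have h : (fun i => ∑ t : Fin 2,
        (((A * B)⁻¹ : Matrix.unitaryGroup (Fin 2) ℂ) : Matrix (Fin 2) (Fin 2) ℂ) i t •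
          MvPolynomial.X t) =
        fun i => MvPolynomial.aeval (R := ℂ) (S₁ := MvPolynomial (Fin 2) ℂ)
          (fun s => ∑ t : Fin 2, ((A⁻¹ : Matrix.unitaryGroup (Fin 2) ℂ) :
            Matrix (Fin 2) (Fin 2) ℂ) s t • MvPolynomial.X t)
          (∑ s : Fin 2, ((B⁻¹ : Matrix.unitaryGroup (Fin 2) ℂ) :
            Matrix (Fin 2) (Fin 2) ℂ) i s • MvPolynomial.X s) := by
      funext i
      rw [mul_inv_rev, Matrix.UnitaryGroup.mul_val]
      rw [map_sum]
      simp only [map_smul, MvPolynomial.aeval_X]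
      simp only [Finset.smul_sum, smul_smul]
      rw [Finset.sum_comm]
      simp only [← Finset.sum_smul]
      exact Finset.sum_congr rfl fun t _ => by rw [Matrix.mul_apply]
    rw [h, ← MvPolynomial.comp_aeval_apply]

lemma orbit_eq_of (l : ℕ) (S : Matrix.unitaryGroup (Fin 2) ℂ) (P Q : MvPolynomial (Fin 2) ℂ)
    (hS : act l S P = Q) :
    Set.range (fun A : Matrix.unitaryGroup (Fin 2) ℂ => act l A P) =
      Set.range (fun A : Matrix.unitaryGroup (Fin 2) ℂ => act l A Q) := by
  ext R
  constructor
  · rintro ⟨A, rfl⟩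
    exact ⟨A * S⁻¹, by simp only [act_mul, ← hS, act_mul, inv_mul_cancel_right]⟩
  · rintro ⟨A, rfl⟩
    refine ⟨A * S, ?_⟩
    simp only
    rw [← hS, act_mul]

open Polynomial in
lemma phi_act (l m j : ℕ) (A : Matrix.unitaryGroup (Fin 2) ℂ) :
    MvPolynomial.aeval ![(X : ℂ[X]), 1] (act l A (monom m j)) =
    C ((A : Matrix (Fin 2) (Fin 2) ℂ).det ^ l) *
      (C (((A⁻¹ : Matrix.unitaryGroup (Fin 2) ℂ) : Matrix (Fin 2) (Fin 2) ℂ) 0 0) * X +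
       C (((A⁻¹ : Matrix.unitaryGroup (Fin 2) ℂ) : Matrix (Fin 2) (Fin 2) ℂ) 0 1)) ^ (m - j) *
      (C (((A⁻¹ : Matrix.unitaryGroup (Fin 2) ℂ) : Matrix (Fin 2) (Fin 2) ℂ) 1 0) * X +
       C (((A⁻¹ : Matrix.unitaryGroup (Fin 2) ℂ) : Matrix (Fin 2) (Fin 2) ℂ) 1 1)) ^ j := by
  simp only [act, monom, map_smul, map_mul, map_pow, map_sum, MvPolynomial.aeval_X,
    Fin.sum_univ_two, map_add, Matrix.cons_val_zero, Matrix.cons_val_one, Matrix.head_cons,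
    Polynomial.smul_eq_C_mul, smul_eq_mul]
  ring

open Polynomial in
lemma phi_monom (m k : ℕ) :
    MvPolynomial.aeval ![(X : ℂ[X]), 1] (monom m k) = (X : ℂ[X]) ^ (m - k) := by
  simp [monom]

lemma act_swap (l m j : ℕ) (hj : j ≤ m) (S : Matrix.unitaryGroup (Fin 2) ℂ) (s t : ℂ)
    (hS : (S : Matrix (Fin 2) (Fin 2) ℂ) = !![0, s; t, 0]) :
    act l S (monom m j) =
      ((-(s*t))^l * (starRingEnd ℂ t)^(m-j) * (starRingEnd ℂ s)^j) • monom m (m-j) := by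
  have hdet : (S : Matrix (Fin 2) (Fin 2) ℂ).det = -(s*t) := by
    rw [hS, Matrix.det_fin_two_of]; ring
  have hinv : ((S⁻¹ : Matrix.unitaryGroup (Fin 2) ℂ) : Matrix (Fin 2) (Fin 2) ℂ) =
      !![0, starRingEnd ℂ t; starRingEnd ℂ s, 0] := by
    rw [Matrix.UnitaryGroup.inv_val, hS]
    ext i k
    fin_cases i <;> fin_cases k <;>
      simp [Matrix.star_eq_conjTranspose, Matrix.conjTranspose_apply]
  rw [act, hdet, hinv, monom, monom, Nat.sub_sub_self hj]
  simp only [map_mul, map_pow, MvPolynomial.aeval_X, Fin.sum_univ_two,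
    Matrix.of_apply, Matrix.cons_val', Matrix.cons_val_zero, Matrix.cons_val_one,
    Matrix.head_cons, Matrix.empty_val', Matrix.cons_val_fin_one, Matrix.head_fin_const,
    zero_smul, zero_add, add_zero, smul_pow, MvPolynomial.smul_eq_C_mul, map_mul, map_pow,
    MvPolynomial.C_0, zero_mul, map_neg]
  ring

open Complex in
lemma unit_calc (n1 n2 : ℕ) (h : n1 ≠ n2) :
    ∃ z : ℂ, Complex.normSq z = 1 ∧ (-1 : ℂ)^n1 * z^n1 * (starRingEnd ℂ z)^n2 = 1 := by
  set θ : ℝ := n1 * Real.pi / ((n1 : ℝ) - n2) with hθdef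
  refine ⟨Complex.exp (θ * I), ?_, ?_⟩
  · rw [Complex.normSq_eq_norm_sq, Complex.norm_exp_ofReal_mul_I]; norm_num
  · have hne : (n1 : ℝ) - n2 ≠ 0 := sub_ne_zero.mpr (by exact_mod_cast h)
    have hconj : (starRingEnd ℂ) (Complex.exp (θ * I)) = Complex.exp (-(θ * I)) := by
      rw [← Complex.exp_conj]; simp [Complex.conj_ofReal]
    rw [hconj, ← Complex.exp_nat_mul, ← Complex.exp_nat_mul, mul_assoc, ← Complex.exp_add]
    have harg : (n1 : ℂ) * (↑θ * I) + (n2 : ℂ) * -(↑θ * I) = (n1 : ℝ) * Real.pi * I := by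
      have hx : ((n1 : ℝ) - n2) * θ = n1 * Real.pi := by
        rw [hθdef]; field_simp
      calc (n1 : ℂ) * (↑θ * I) + (n2 : ℂ) * -(↑θ * I)
          = (((n1 : ℝ) - n2) * θ : ℝ) * I := by push_cast; ring
        _ = ((n1 : ℝ) * Real.pi : ℝ) * I := by rw [hx]
        _ = (n1 : ℝ) * Real.pi * I := by push_cast; ring
    rw [harg]
    push_cast
    rw [show (n1 : ℂ) * ↑Real.pi * I = n1 * (↑Real.pi * I) by ring, Complex.exp_nat_mul,
      Complex.exp_pi_mul_I, ← mul_pow]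
    norm_num

lemma swap_mem (s t : ℂ) (hs : Complex.normSq s = 1) (ht : Complex.normSq t = 1) :
    !![0, s; t, 0] ∈ Matrix.unitaryGroup (Fin 2) ℂ := by
  rw [Matrix.mem_unitaryGroup_iff]
  ext i k
  fin_cases i <;> fin_cases k <;>
    simp [Matrix.mul_apply, Fin.sum_univ_two, Matrix.star_eq_conjTranspose,
      Matrix.conjTranspose_apply, Matrix.one_apply, Complex.mul_conj, hs, ht]

set_option maxRecDepth 8000 in
/-- Let `m ≥ 2`, `l ≥ 0`, `0 ≤ j, k ≤ m`.  The `U(2)`-orbits through the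
monomials `z^{m−j}w^j` and `z^{m−k}w^k` in `S^m_l(ℂ²)` coincide if and only if `k = j` or
`k = m − j`. -/
theorem stmt_7 (m l j k : ℕ) (hm : 2 ≤ m) (hj : j ≤ m) (hk : k ≤ m) :
    Set.range (fun A : Matrix.unitaryGroup (Fin 2) ℂ => act l A (monom m j)) =
      Set.range (fun A : Matrix.unitaryGroup (Fin 2) ℂ => act l A (monom m k)) ↔
    (k = j ∨ k = m - j) := by
  constructor
  · intro h
    have hmem : monom m k ∈ Set.range
        (fun A : Matrix.unitaryGroup (Fin 2) ℂ => act l A (monom m j)) := by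
      rw [h]; exact ⟨1, act_one l _⟩
    obtain ⟨A, hA⟩ := hmem
    have hphi := congrArg (MvPolynomial.aeval ![(Polynomial.X : Polynomial ℂ), 1]) hA
    rw [phi_act, phi_monom] at hphi
    have hu : ((A : Matrix (Fin 2) (Fin 2) ℂ).det ^ l : ℂ) ≠ 0 :=
      pow_ne_zero _ (Matrix.UnitaryGroup.det_isUnit A).ne_zero
    have hdet : ((A⁻¹ : Matrix.unitaryGroup (Fin 2) ℂ) : Matrix (Fin 2) (Fin 2) ℂ) 0 0 *
          ((A⁻¹ : Matrix.unitaryGroup (Fin 2) ℂ) : Matrix (Fin 2) (Fin 2) ℂ) 1 1 -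
        ((A⁻¹ : Matrix.unitaryGroup (Fin 2) ℂ) : Matrix (Fin 2) (Fin 2) ℂ) 0 1 *
          ((A⁻¹ : Matrix.unitaryGroup (Fin 2) ℂ) : Matrix (Fin 2) (Fin 2) ℂ) 1 0 ≠ 0 := by
      rw [← Matrix.det_fin_two]
      exact (Matrix.UnitaryGroup.det_isUnit A⁻¹).ne_zero
    have := key_aux _ _ _ _ _ (m - j) j (m - k) hu hdet (by omega) hphi
    omega
  · rintro (rfl | rfl)
    · rfl
    · by_cases hcase : j = m - j
      · rw [← hcase]
      · obtain ⟨s, t, hs1, ht1, hsc⟩ : ∃ s t : ℂ, Complex.normSq s = 1 ∧ Complex.normSq t = 1 ∧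
            (-(s*t))^l * (starRingEnd ℂ t)^(m-j) * (starRingEnd ℂ s)^j = 1 := by
          by_cases hl : l = j
          · obtain ⟨t, ht1, ht2⟩ := unit_calc l (m-j) (by omega)
            refine ⟨1, t, by simp, ht1, ?_⟩
            simp only [one_mul, map_one, one_pow, mul_one]
            rw [show (-t)^l = (-1:ℂ)^l * t^l by rw [← neg_one_mul, mul_pow]]
            linear_combination ht2
          · obtain ⟨s, hs1, hs2⟩ := unit_calc l j hl
            refine ⟨s, 1, hs1, by simp, ?_⟩
            simp only [mul_one, map_one, one_pow]
            rw [show (-s)^l = (-1:ℂ)^l * s^l by rw [← neg_one_mul, mul_pow]]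
            linear_combination hs2
        exact orbit_eq_of l ⟨_, swap_mem s t hs1 ht1⟩ _ _
          (by rw [act_swap l m j hj _ s t rfl, hsc, one_smul])
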